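/- arXiv:2508.05409 — 2 statements merged into one kernel-verified Lean document; each statement's English description precedes it below -/
import Mathlib

section
/- For an ensemble of M = 2k+1 independent binary voters, each correct with probability p > 1/2 (i.i.d. Bernoulli), the probability that the majority vote is correct is at least p. More precisely, the probability that at least k+1 out of 2k+1 voters are correct is ≥ p for all k ≥ 0. -/
/-! Adding two voters to an electorate of `2k+1` changes the verdict only when the first `2k+1`
votes split `k+1 : k` (the newcomers overturn it if both are wrong) or `k : k+1` (they overturn
it if both are right). Since `C(2k+1,k+1) = C(2k+1,k)`, the net gain is
`C(2k+1,k) (p(1-p))^(k+1) (2p-1) ≥ 0`, so the majority is right with probability increasing in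
`k`, starting from `p` at `k = 0`. -/

open Finset

section CommSemiring

variable {R : Type*} [CommSemiring R] (x y : R)

def binomialTail (n m : ℕ) : R :=
  ∑ j ∈ Icc m n, (n.choose j : R) * x ^ j * y ^ (n - j)

theorem binomialTail_eq_add {n m : ℕ} (h : m ≤ n) :
    binomialTail x y n m = n.choose m * x ^ m * y ^ (n - m) + binomialTail x y n (m + 1) := by
  rw [binomialTail, Icc_eq_cons_Ioc h, sum_cons, ← Icc_add_one_left_eq_Ioc]
  rfl

theorem binomialTail_succ_succ (n m : ℕ) :
    binomialTail x y (n + 1) (m + 1) =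
      (x + y) * binomialTail x y n (m + 1) + n.choose m * x ^ (m + 1) * y ^ (n - m) := by
  rcases lt_or_ge n m with hnm | hmn
  · simp [binomialTail, Nat.choose_eq_zero_of_lt hnm, Icc_eq_empty_of_lt, hnm,
      hnm.trans m.lt_succ_self]
  have pascal : binomialTail x y (n + 1) (m + 1) =
      ∑ j ∈ Icc m n, ((n.choose j + n.choose (j + 1) : ℕ) : R) * x ^ (j + 1) * y ^ (n - j) := by
    rw [binomialTail, ← map_add_right_Icc, sum_map]
    simp only [addRightEmbedding_apply, Nat.choose_succ_succ, Nat.add_sub_add_right]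
  have lower : ∑ j ∈ Icc m n, (n.choose j : R) * x ^ (j + 1) * y ^ (n - j) =
      x * binomialTail x y n m := by
    rw [binomialTail, mul_sum]
    exact sum_congr rfl fun j _ => by ring
  have upper : ∑ j ∈ Icc m n, (n.choose (j + 1) : R) * x ^ (j + 1) * y ^ (n - j) =
      y * binomialTail x y n (m + 1) := by
    calc ∑ j ∈ Icc m n, (n.choose (j + 1) : R) * x ^ (j + 1) * y ^ (n - j)
        = ∑ i ∈ Icc (m + 1) (n + 1), (n.choose i : R) * x ^ i * y ^ (n + 1 - i) := by
          rw [← map_add_right_Icc, sum_map]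
          simp only [addRightEmbedding_apply, Nat.add_sub_add_right]
      _ = ∑ i ∈ Icc (m + 1) n, (n.choose i : R) * x ^ i * y ^ (n + 1 - i) := by
          simp [sum_Icc_succ_top (Nat.succ_le_succ hmn)]
      _ = y * binomialTail x y n (m + 1) := by
          rw [binomialTail, mul_sum]
          refine sum_congr rfl fun i hi => ?_
          rw [Nat.sub_add_comm (mem_Icc.1 hi).2]
          ring
  rw [pascal]
  push_cast
  simp only [add_mul, sum_add_distrib, lower, upper, binomialTail_eq_add x y hmn]
  ring

end CommSemiring

theorem binomialTail_majority_succ {R : Type*} [CommRing R] {x y : R} (hxy : x + y = 1) (k : ℕ) :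
    binomialTail x y (2 * k + 3) (k + 2) =
      binomialTail x y (2 * k + 1) (k + 1) +
        (2 * k + 1).choose k * (x * y) ^ (k + 1) * (x - y) := by
  have add_last := binomialTail_succ_succ x y (2 * k + 2) (k + 1)
  have add_second_last := binomialTail_succ_succ x y (2 * k + 1) (k + 1)
  have drop_median := binomialTail_eq_add x y (by omega : k + 1 ≤ 2 * k + 1)
  have central : (2 * k + 2).choose (k + 1) = 2 * (2 * k + 1).choose k := by
    rw [Nat.choose_succ_succ, Nat.choose_symm_half]
    ring
  simp only [hxy, one_mul, Nat.choose_symm_half, central, show 2 * k + 2 + 1 = 2 * k + 3 from rfl,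
    show 2 * k + 1 + 1 = 2 * k + 2 from rfl, show k + 1 + 1 = k + 2 from rfl,
    show 2 * k + 2 - (k + 1) = k + 1 by omega, show 2 * k + 1 - (k + 1) = k by omega]
    at add_last add_second_last drop_median
  rw [add_last, add_second_last, drop_median]
  push_cast
  linear_combination (↑((2 * k + 1).choose k) * x ^ (k + 1) * y ^ k * (1 + y)) * hxy

/-- For an ensemble of `M = 2k+1` i.i.d. binary voters each correct with probability
`p > 1/2`, the probability that at least `k+1` out of `2k+1` voters are correct,
`∑_{j=k+1}^{2k+1} C(2k+1, j) p^j (1-p)^{2k+1-j}`, is at least `p`. -/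
theorem majority_vote_probability_ge (k : ℕ) (p : ℝ) (hp : 1/2 < p) (hp1 : p ≤ 1) :
    p ≤ ∑ j ∈ Finset.Icc (k+1) (2*k+1),
      (Nat.choose (2*k+1) j : ℝ) * p ^ j * (1 - p) ^ (2*k+1 - j) := by
  change p ≤ binomialTail p (1 - p) (2 * k + 1) (k + 1)
  induction k with
  | zero => simp [binomialTail]
  | succ k ih =>
    rw [show 2 * (k + 1) + 1 = 2 * k + 3 by ring,
      binomialTail_majority_succ (add_sub_cancel p 1) k]
    have gain_nonneg : 0 ≤ ((2 * k + 1).choose k : ℝ) * (p * (1 - p)) ^ (k + 1) * (p - (1 - p)) :=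
      mul_nonneg (mul_nonneg (Nat.cast_nonneg _) (pow_nonneg (by nlinarith) _)) (by linarith)
    linarith
end

section
/- Under the hypotheses of projected gradient descent on an L-smooth function φ over a compact convex set C with step size α ∈ (0, 2/L), every accumulation point x* of the iterate sequence (x_t) is a stationary point of φ on C, i.e., x* = Proj_C(x* − α ∇φ(x*)). -/
/-!
By the projection inequality `⟪z - P z, w - P z⟫ ≤ 0` at `w = x t` and the descent lemma, each
step decreases `φ` by at least `(1/α - L/2) ‖x (t+1) - x t‖²`, a positive multiple because
`α L < 2`. The values `φ (x t)` are therefore nonincreasing, so they converge, necessarily to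
the cluster value `φ x*`, and the steps `x (t+1) - x t` tend to `0`. Along an ultrafilter on
which `x t → x*`, both `x (t+1) → x*` and `x (t+1) = T (x t) → T x*`, where
`T z = P (z - α ∇φ z)` is continuous since `P` is nonexpansive; hence `x* = T x*`.
-/

open scoped NNReal
open Filter Topology Set
open scoped InnerProductSpace

section Smooth

variable {E : Type*} [NormedAddCommGroup E] [InnerProductSpace ℝ E] [CompleteSpace E]
  {f : E → ℝ} {L : ℝ≥0}

theorem hasDerivAt_comp_add_smul (hf : Differentiable ℝ f) (x v : E) (t : ℝ) :
    HasDerivAt (fun s : ℝ => f (x + s • v)) (⟪gradient f (x + t • v), v⟫_ℝ) t := by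
  have hline : HasDerivAt (fun s : ℝ => x + s • v) v t := by
    simpa using ((hasDerivAt_id t).smul_const v).const_add x
  rw [gradient, InnerProductSpace.toDual_symm_apply]
  exact (hf (x + t • v)).hasFDerivAt.comp_hasDerivAt t hline

theorem image_le_add_inner_gradient_add_sq (hf : Differentiable ℝ f)
    (hlip : LipschitzWith L (gradient f)) (x y : E) :
    f y ≤ f x + ⟪gradient f x, y - x⟫_ℝ + L / 2 * ‖y - x‖ ^ 2 := by
  set v := y - x
  set B : ℝ → ℝ := fun t => f x + t * ⟪gradient f x, v⟫_ℝ + L / 2 * ‖v‖ ^ 2 * t ^ 2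
  have hB : ∀ t, HasDerivAt B (⟪gradient f x, v⟫_ℝ + L * ‖v‖ ^ 2 * t) t := fun t => by
    refine ((((hasDerivAt_id t).mul_const ⟪gradient f x, v⟫_ℝ).const_add (f x)).add
      ((hasDerivAt_pow 2 t).const_mul (L / 2 * ‖v‖ ^ 2))).congr_deriv ?_
    simp only [Nat.cast_ofNat]
    ring
  have hslope : ∀ t ∈ Ico (0 : ℝ) 1,
      ⟪gradient f (x + t • v), v⟫_ℝ ≤ ⟪gradient f x, v⟫_ℝ + L * ‖v‖ ^ 2 * t := by
    intro t ht
    have hgrad : ‖gradient f (x + t • v) - gradient f x‖ ≤ L * (t * ‖v‖) := by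
      simpa [dist_eq_norm, norm_smul, abs_of_nonneg ht.1] using hlip.dist_le_mul (x + t • v) x
    calc ⟪gradient f (x + t • v), v⟫_ℝ
        = ⟪gradient f x, v⟫_ℝ + ⟪gradient f (x + t • v) - gradient f x, v⟫_ℝ := by
          rw [inner_sub_left]; ring
      _ ≤ ⟪gradient f x, v⟫_ℝ + L * (t * ‖v‖) * ‖v‖ := by
          gcongr
          exact (real_inner_le_norm _ _).trans (by gcongr)
      _ = ⟪gradient f x, v⟫_ℝ + L * ‖v‖ ^ 2 * t := by ring
  have := image_le_of_deriv_right_le_deriv_boundary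
    (f := fun t : ℝ => f (x + t • v)) (a := 0) (b := 1)
    (fun t _ => (hasDerivAt_comp_add_smul hf x v t).continuousAt.continuousWithinAt)
    (fun t _ => (hasDerivAt_comp_add_smul hf x v t).hasDerivWithinAt)
    (by simp [B]) (fun t _ => (hB t).continuousAt.continuousWithinAt)
    (fun t _ => (hB t).hasDerivWithinAt) hslope (right_mem_Icc.2 zero_le_one)
  simpa [B, v] using this

end Smooth

section Projection

variable {E : Type*} [NormedAddCommGroup E] [InnerProductSpace ℝ E] {C : Set E}

theorem inner_sub_nonpos_of_forall_norm_sub_le (hC : Convex ℝ C) {z p : E} (hp : p ∈ C)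
    (hmin : ∀ w ∈ C, ‖z - p‖ ≤ ‖z - w‖) : ∀ w ∈ C, ⟪z - p, w - p⟫_ℝ ≤ 0 := by
  have : Nonempty C := ⟨⟨p, hp⟩⟩
  refine (norm_eq_iInf_iff_real_inner_le_zero hC hp).1 (le_antisymm ?_ ?_)
  · exact le_ciInf fun w => hmin w w.2
  · exact ciInf_le ⟨0, by rintro _ ⟨w, rfl⟩; exact norm_nonneg _⟩ (⟨p, hp⟩ : C)

variable {P : E → E}

theorem sq_norm_sub_le_inner_of_forall_norm_sub_le (hC : Convex ℝ C)
    (hP : ∀ z, P z ∈ C ∧ ∀ w ∈ C, ‖z - P z‖ ≤ ‖z - w‖) (a b : E) :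
    ‖P a - P b‖ ^ 2 ≤ ⟪a - b, P a - P b⟫_ℝ := by
  have ha := inner_sub_nonpos_of_forall_norm_sub_le hC (hP a).1 (hP a).2 (P b) (hP b).1
  have hb := inner_sub_nonpos_of_forall_norm_sub_le hC (hP b).1 (hP b).2 (P a) (hP a).1
  have : ⟪a - b, P a - P b⟫_ℝ - ‖P a - P b‖ ^ 2
      = -⟪a - P a, P b - P a⟫_ℝ - ⟪b - P b, P a - P b⟫_ℝ := by
    rw [← real_inner_self_eq_norm_sq]
    simp only [inner_sub_left, inner_sub_right, real_inner_comm]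
    ring
  linarith

theorem lipschitzWith_one_of_forall_norm_sub_le (hC : Convex ℝ C)
    (hP : ∀ z, P z ∈ C ∧ ∀ w ∈ C, ‖z - P z‖ ≤ ‖z - w‖) : LipschitzWith 1 P := by
  refine LipschitzWith.of_dist_le_mul fun a b => ?_
  rw [dist_eq_norm, dist_eq_norm, NNReal.coe_one, one_mul]
  have hfirm := sq_norm_sub_le_inner_of_forall_norm_sub_le hC hP a b
  have hcs := real_inner_le_norm (a - b) (P a - P b)
  nlinarith [norm_nonneg (P a - P b), norm_nonneg (a - b)]

end Projection

theorem Antitone.tendsto_of_mapClusterPt {α : Type*} [ConditionallyCompleteLinearOrder α]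
    [TopologicalSpace α] [OrderTopology α] [FirstCountableTopology α] [NoMinOrder α]
    {u : ℕ → α} {a : α} (hu : Antitone u) (ha : MapClusterPt a atTop u) :
    Tendsto u atTop (𝓝 a) := by
  obtain ⟨ψ, hψ, hlim⟩ := ha.tendsto_subseq
  exact (tendsto_iff_tendsto_subseq_of_antitone hu hψ.tendsto_atTop).2 hlim

theorem tendsto_succ_sub_of_add_mul_sq_norm_le {E : Type*} [SeminormedAddCommGroup E]
    {x : ℕ → E} {u : ℕ → ℝ} {a c : ℝ} (hc : 0 < c) (hu : Tendsto u atTop (𝓝 a))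
    (hdec : ∀ t, u (t + 1) + c * ‖x (t + 1) - x t‖ ^ 2 ≤ u t) :
    Tendsto (fun t => x (t + 1) - x t) atTop (𝓝 0) := by
  have hgap : Tendsto (fun t => c⁻¹ * (u t - u (t + 1))) atTop (𝓝 0) := by
    simpa using (hu.sub (hu.comp (tendsto_add_atTop_nat 1))).const_mul c⁻¹
  have hsq : Tendsto (fun t => ‖x (t + 1) - x t‖ ^ 2) atTop (𝓝 0) := by
    refine squeeze_zero (fun t => by positivity) (fun t => ?_) hgap
    rw [le_inv_mul_iff₀ hc]
    linarith [hdec t]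
  rw [tendsto_zero_iff_norm_tendsto_zero]
  simpa using hsq.sqrt

theorem Function.isFixedPt_of_mapClusterPt {G : Type*} [TopologicalSpace G] [AddGroup G]
    [IsTopologicalAddGroup G] [T2Space G] {T : G → G} {x : ℕ → G} {a : G}
    (hT : ContinuousAt T a) (hx : ∀ t, x (t + 1) = T (x t))
    (hstep : Tendsto (fun t => x (t + 1) - x t) atTop (𝓝 0)) (ha : MapClusterPt a atTop x) :
    IsFixedPt T a := by
  obtain ⟨U, hU, hxU⟩ := mapClusterPt_iff_ultrafilter.1 ha
  have hnext : Tendsto (fun t => x (t + 1)) U (𝓝 a) := by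
    simpa using (hstep.mono_left hU).add hxU
  exact tendsto_nhds_unique ((hT.tendsto.comp hxU).congr fun t => (hx t).symm) hnext

section ProjectedGradient

variable {E : Type*} [NormedAddCommGroup E] [InnerProductSpace ℝ E] [CompleteSpace E]
  {f : E → ℝ} {L : ℝ≥0} {C : Set E} {P : E → E}

theorem add_mul_sq_norm_le_of_projected_gradient_step (hf : Differentiable ℝ f)
    (hlip : LipschitzWith L (gradient f)) (hC : Convex ℝ C)
    (hP : ∀ z, P z ∈ C ∧ ∀ w ∈ C, ‖z - P z‖ ≤ ‖z - w‖) {α : ℝ} (hα : 0 < α) {y : E}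
    (hy : y ∈ C) :
    f (P (y - α • gradient f y)) + (1 / α - L / 2) * ‖P (y - α • gradient f y) - y‖ ^ 2
      ≤ f y := by
  set g := gradient f y
  set z := P (y - α • g)
  have hvi : α * ⟪g, z - y⟫_ℝ + ‖z - y‖ ^ 2 ≤ 0 := by
    have h := inner_sub_nonpos_of_forall_norm_sub_le hC (hP (y - α • g)).1 (hP _).2 y hy
    have : ⟪y - α • g - z, y - z⟫_ℝ = α * ⟪g, z - y⟫_ℝ + ‖z - y‖ ^ 2 := by
      rw [← real_inner_self_eq_norm_sq]
      simp only [inner_sub_left, inner_sub_right, real_inner_smul_left, real_inner_smul_right,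
        real_inner_comm]
      ring
    rwa [this] at h
  have hinner : ⟪g, z - y⟫_ℝ + 1 / α * ‖z - y‖ ^ 2 ≤ 0 := by
    have : ⟪g, z - y⟫_ℝ + 1 / α * ‖z - y‖ ^ 2 = (α * ⟪g, z - y⟫_ℝ + ‖z - y‖ ^ 2) / α := by
      field_simp
    rw [this]
    exact div_nonpos_of_nonpos_of_nonneg hvi hα.le
  linarith [image_le_add_inner_gradient_add_sq hf hlip y z]

end ProjectedGradient

theorem pgd_accumulation_stationary_general {d : ℕ}
    (φ : EuclideanSpace ℝ (Fin d) → ℝ) (L : ℝ≥0)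
    (hdiff : Differentiable ℝ φ)
    (hlip : LipschitzWith L (gradient φ))
    (C : Set (EuclideanSpace ℝ (Fin d)))
    (hCconv : Convex ℝ C)
    (P : EuclideanSpace ℝ (Fin d) → EuclideanSpace ℝ (Fin d))
    (hP : ∀ z, P z ∈ C ∧ ∀ w ∈ C, ‖z - P z‖ ≤ ‖z - w‖)
    (α : ℝ) (hα : 0 < α) (hα2 : α < 2 / L)
    (x : ℕ → EuclideanSpace ℝ (Fin d)) (hx0 : x 0 ∈ C)
    (hiter : ∀ t, x (t+1) = P (x t - α • gradient φ (x t)))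
    (xstar : EuclideanSpace ℝ (Fin d))
    (hacc : MapClusterPt xstar Filter.atTop x) :
    xstar = P (xstar - α • gradient φ xstar) := by
  have hc : 0 < 1 / α - (L : ℝ) / 2 := by
    have hαL : α * L < 2 := by
      rcases L.coe_nonneg.eq_or_lt with hL | hL
      · rw [← hL]; norm_num
      · exact (lt_div_iff₀ hL).1 hα2
    have : (L : ℝ) / 2 < 1 / α := by rw [lt_div_iff₀ hα]; linarith
    linarith
  have hxC : ∀ t, x t ∈ C := fun t => by
    cases t with
    | zero => exact hx0
    | succ t => rw [hiter t]; exact (hP _).1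
  have hdec : ∀ t, φ (x (t + 1)) + (1 / α - L / 2) * ‖x (t + 1) - x t‖ ^ 2 ≤ φ (x t) :=
    fun t => hiter t ▸
      add_mul_sq_norm_le_of_projected_gradient_step hdiff hlip hCconv hP hα (hxC t)
  have hanti : Antitone (φ ∘ x) :=
    antitone_nat_of_succ_le fun t => by
      show φ (x (t + 1)) ≤ φ (x t)
      linarith [hdec t, mul_nonneg hc.le (sq_nonneg ‖x (t + 1) - x t‖)]
  have hval : Tendsto (φ ∘ x) atTop (𝓝 (φ xstar)) :=
    hanti.tendsto_of_mapClusterPt (hacc.tendsto_comp (hdiff.continuous.tendsto xstar))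
  have hT : Continuous fun z => P (z - α • gradient φ z) :=
    (lipschitzWith_one_of_forall_norm_sub_le hCconv hP).continuous.comp
      (continuous_id.sub (hlip.continuous.const_smul α))
  exact (Function.isFixedPt_of_mapClusterPt hT.continuousAt hiter
    (tendsto_succ_sub_of_add_mul_sq_norm_le hc hval hdec) hacc).symm

/-- For projected gradient descent on an `L`-smooth function over a nonempty compact
convex set `C` with step size `α ∈ (0, 2/L)`, every accumulation point `xstar` of the
iterates is a fixed point of the projected gradient map:
`xstar = P (xstar - α • ∇φ(xstar))`. -/
theorem pgd_accumulation_stationary {d : ℕ}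
    (φ : EuclideanSpace ℝ (Fin d) → ℝ) (L : ℝ≥0) (hL : 0 < (L : ℝ))
    (hdiff : Differentiable ℝ φ)
    (hlip : LipschitzWith L (gradient φ))
    (C : Set (EuclideanSpace ℝ (Fin d)))
    (hC : C.Nonempty) (hCcompact : IsCompact C) (hCconv : Convex ℝ C)
    (P : EuclideanSpace ℝ (Fin d) → EuclideanSpace ℝ (Fin d))
    (hP : ∀ z, P z ∈ C ∧ ∀ w ∈ C, ‖z - P z‖ ≤ ‖z - w‖)
    (α : ℝ) (hα : 0 < α) (hα2 : α < 2 / L)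
    (x : ℕ → EuclideanSpace ℝ (Fin d)) (hx0 : x 0 ∈ C)
    (hiter : ∀ t, x (t+1) = P (x t - α • gradient φ (x t)))
    (xstar : EuclideanSpace ℝ (Fin d))
    (hacc : MapClusterPt xstar Filter.atTop x) :
    xstar = P (xstar - α • gradient φ xstar) :=
  pgd_accumulation_stationary_general φ L hdiff hlip C hCconv P hP α hα hα2 x hx0 hiter xstar hacc
end
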